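/- arXiv:2007.07604 — 2 statements merged into one kernel-verified Lean document; each statement's English description precedes it below -/
import Mathlib

section
/- Let D be a square-free positive integer with D ≡ 1 (mod 4) and D > 1. Then in the ring of integers O = ℤ[√-D] of ℚ(√-D), the ideal generated by √-D + 1 and 2 is not principal. -/
/-!
If `(√-D + 1, 2) = (g)`, then `N g` divides both `N (√-D + 1) = D + 1 ≡ 2 (mod 4)` and `N 2 = 4`,
hence divides `2`. Since `D > 2`, the form `a² + D b²` never takes the value `2`, so `N g = 1`
and the ideal would be the whole ring. It is not: for odd `D`, sending `√-D ↦ 1` defines a ring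
homomorphism `ℤ[√-D] → 𝔽₂` that kills both generators.
-/

namespace Zsqrtd

variable {d : ℤ}

theorem norm_ne_two (hd : d < -2) (z : ℤ√d) : z.norm ≠ 2 := by
  rw [norm_def]
  rcases eq_or_ne z.im 0 with him | him
  · rw [him, mul_zero, sub_zero]
    intro h
    have : z.re ≤ 1 := by nlinarith
    have : -1 ≤ z.re := by nlinarith
    interval_cases z.re <;> omega
  · have : 1 ≤ z.im * z.im := by
      have := mul_self_pos.mpr him
      omega
    nlinarith [mul_self_nonneg z.re]

theorem isUnit_of_norm_dvd_two (hd : d < -2) {z : ℤ√d} (h : z.norm ∣ 2) : IsUnit z := by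
  rw [← norm_eq_one_iff' (by omega)]
  have hpos : 0 < z.norm :=
    (norm_nonneg (by omega) z).lt_of_ne fun h0 => by rw [← h0] at h; omega
  have hle : z.norm ≤ 2 := Int.le_of_dvd two_pos h
  have := norm_ne_two hd z
  omega

theorem span_sqrtd_add_one_two_ne_top (hd : Odd d) :
    Ideal.span ({sqrtd + 1, 2} : Set (ℤ√d)) ≠ ⊤ := by
  let φ : ℤ√d →+* ZMod 2 := lift ⟨1, by rw [mul_one, (ZMod.intCast_eq_one_iff_odd).mpr hd]⟩
  refine ne_top_of_le_ne_top (RingHom.ker_ne_top φ) ?_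
  rw [Ideal.span_le, Set.insert_subset_iff, Set.singleton_subset_iff]
  exact ⟨by simp +decide [φ], by simp +decide [φ]⟩

end Zsqrtd

open Zsqrtd in
theorem stmt_1_general (D : ℕ) (hD1 : 1 < D) (hmod : D % 4 = 1) :
    ¬ (Ideal.span ({Zsqrtd.sqrtd + 1, (2 : Zsqrtd (-(D : ℤ)))} :
        Set (Zsqrtd (-(D : ℤ))))).IsPrincipal := by
  rintro ⟨g, hg⟩
  change _ = Ideal.span {g} at hg
  have hd : -(D : ℤ) < -2 := by omega
  have hdvd : ∀ x ∈ ({sqrtd + 1, 2} : Set (ℤ√(-(D : ℤ)))), g.norm ∣ x.norm := fun x hx =>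
    map_dvd normMonoidHom <| Ideal.mem_span_singleton.mp <| by rw [← hg]; exact Ideal.subset_span hx
  have hnorm : g.norm ∣ 2 := by
    have h₁ : g.norm ∣ 1 + D := by simpa [norm_def] using hdvd _ (Set.mem_insert _ _)
    have h₂ : g.norm ∣ 4 := by simpa [norm_def] using hdvd 2 (Set.mem_insert_of_mem _ rfl)
    obtain ⟨k, hk⟩ : ∃ k : ℤ, (D : ℤ) = 4 * k + 1 := ⟨(D / 4 : ℕ), by omega⟩
    have h := dvd_sub h₁ (h₂.mul_right k)
    rwa [show (1 + D : ℤ) - 4 * k = 2 by omega] at h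
  have hodd : Odd (-(D : ℤ)) := (Nat.odd_iff.mpr (by omega)).natCast.neg
  exact span_sqrtd_add_one_two_ne_top hodd <|
    hg.trans (Ideal.span_singleton_eq_top.mpr (isUnit_of_norm_dvd_two hd hnorm))

/-- For squarefree D ≡ 1 mod 4, D > 1, the ideal (√-D + 1, 2) of ℤ[√-D]
is not principal. -/
theorem stmt_1 (D : ℕ) (hD : Squarefree D) (hD1 : 1 < D) (hmod : D % 4 = 1) :
    ¬ (Ideal.span ({Zsqrtd.sqrtd + 1, (2 : Zsqrtd (-(D : ℤ)))} :
        Set (Zsqrtd (-(D : ℤ))))).IsPrincipal :=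
  stmt_1_general D hD1 hmod
end

section
/- Let D be a square-free positive integer with D ≡ 1 or 2 (mod 4) and let m be a prime divisor of D with m < D. Then the ideal (√-D, m) in ℤ[√-D] satisfies (√-D, m)² = (m), i.e. its square is the principal ideal generated by m; in particular its class has order exactly 2 in the class group. -/
/-- For squarefree D ≡ 1 or 2 mod 4 and a prime m ∣ D with m < D,
the ideal I = (√-D, m) of ℤ[√-D] satisfies I² = (m); together with I not being
principal, its class has order exactly 2 in the class group. -/
theorem stmt_2 (D m : ℕ) (hD : Squarefree D) (hDpos : 0 < D)
    (hmod : D % 4 = 1 ∨ D % 4 = 2) (hm : m.Prime) (hdvd : m ∣ D) (hlt : m < D) :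
    (Ideal.span ({Zsqrtd.sqrtd, (m : Zsqrtd (-(D : ℤ)))} :
        Set (Zsqrtd (-(D : ℤ))))) ^ 2
      = Ideal.span ({(m : Zsqrtd (-(D : ℤ)))} : Set (Zsqrtd (-(D : ℤ)))) ∧
    ¬ (Ideal.span ({Zsqrtd.sqrtd, (m : Zsqrtd (-(D : ℤ)))} :
        Set (Zsqrtd (-(D : ℤ))))).IsPrincipal := by
  obtain ⟨k, hk⟩ := hdvd
  -- m and k are coprime
  have hmk : Nat.Coprime m k := by
    rw [hm.coprime_iff_not_dvd]
    intro hkk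
    obtain ⟨t, ht⟩ := hkk
    have : IsUnit m := hD m ⟨t, by rw [hk, ht]; ring⟩
    exact hm.one_lt.ne' (Nat.isUnit_iff.mp this)
  obtain ⟨a, b, hab⟩ := Nat.isCoprime_iff_coprime.mpr hmk
  set d : ℤ := -(D : ℤ) with hd
  have hsq : (Zsqrtd.sqrtd : Zsqrtd d) * Zsqrtd.sqrtd
      = -((m : Zsqrtd d) * (k : Zsqrtd d)) := by
    rw [Zsqrtd.dmuld, hd, hk]
    push_cast
    ring
  set I : Ideal (Zsqrtd d) :=
    Ideal.span ({Zsqrtd.sqrtd, (m : Zsqrtd d)} : Set (Zsqrtd d)) with hI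
  have hmI : (m : Zsqrtd d) ∈ I := Ideal.subset_span (by simp)
  have hsI : (Zsqrtd.sqrtd : Zsqrtd d) ∈ I := Ideal.subset_span (by simp)
  have h1 : I ^ 2 = Ideal.span ({(m : Zsqrtd d)} : Set (Zsqrtd d)) := by
    apply le_antisymm
    · rw [sq]
      rw [Ideal.mul_le]
      intro r hr s hs
      rw [hI, Ideal.mem_span_pair] at hr hs
      obtain ⟨x, y, hr⟩ := hr
      obtain ⟨x', y', hs⟩ := hs
      rw [Ideal.mem_span_singleton]
      refine ⟨-(x * x') * (k : Zsqrtd d) + (x * y' + y * x') * Zsqrtd.sqrtd + y * y' * (m : Zsqrtd d), ?_⟩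
      rw [← hr, ← hs]
      linear_combination (x * x') * hsq
    · rw [Ideal.span_le, Set.singleton_subset_iff, sq]
      have h2 : (m : Zsqrtd d) * (m : Zsqrtd d) ∈ I * I := Ideal.mul_mem_mul hmI hmI
      have h3 : (Zsqrtd.sqrtd : Zsqrtd d) * Zsqrtd.sqrtd ∈ I * I :=
        Ideal.mul_mem_mul hsI hsI
      have key : (m : Zsqrtd d)
          = (a : Zsqrtd d) * ((m : Zsqrtd d) * (m : Zsqrtd d))
            + (-(b : Zsqrtd d)) * ((Zsqrtd.sqrtd : Zsqrtd d) * Zsqrtd.sqrtd) := by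
        have habc : ((a * m + b * k : ℤ) : Zsqrtd d) = 1 := by rw [hab]; norm_num
        push_cast at habc
        rw [hsq]
        linear_combination (-(m : Zsqrtd d)) * habc
      rw [key]
      exact Ideal.add_mem _ (Ideal.mul_mem_left _ _ h2) (Ideal.mul_mem_left _ _ h3)
  refine ⟨h1, ?_⟩
  rintro ⟨α, hα⟩
  have h2 : Ideal.span ({α ^ 2} : Set (Zsqrtd d)) = Ideal.span {(m : Zsqrtd d)} := by
    rw [Ideal.submodule_span_eq] at hα
    rw [← Ideal.span_singleton_pow, ← hα, h1]
  have dvd1 : α ^ 2 ∣ (m : Zsqrtd d) :=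
    Ideal.span_singleton_le_span_singleton.mp h2.ge
  have dvd2 : (m : Zsqrtd d) ∣ α ^ 2 :=
    Ideal.span_singleton_le_span_singleton.mp h2.le
  have hdneg : d ≤ 0 := by rw [hd]; simp
  -- norms
  have hnm : Zsqrtd.norm ((m : ℕ) : Zsqrtd d) = (m : ℤ) * m := Zsqrtd.norm_natCast m
  have nd1 : α.norm * α.norm ∣ (m : ℤ) * m := by
    obtain ⟨c, hc⟩ := dvd1
    refine ⟨c.norm, ?_⟩
    have := congrArg Zsqrtd.norm hc
    rwa [Zsqrtd.norm_mul, sq, Zsqrtd.norm_mul, hnm] at this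
  have nd2 : (m : ℤ) * m ∣ α.norm * α.norm := by
    obtain ⟨c, hc⟩ := dvd2
    refine ⟨c.norm, ?_⟩
    have := congrArg Zsqrtd.norm hc
    rw [Zsqrtd.norm_mul, sq, Zsqrtd.norm_mul, hnm] at this
    linarith [this]
  have hnn : 0 ≤ α.norm := Zsqrtd.norm_nonneg hdneg α
  have heq : α.norm * α.norm = (m : ℤ) * m :=
    Int.dvd_antisymm (by positivity) (by positivity) nd1 nd2
  have hmpos : (0 : ℤ) < m := by exact_mod_cast hm.pos
  have hnα : α.norm = (m : ℤ) := by
    rcases mul_self_eq_mul_self_iff.mp heq with h | h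
    · exact h
    · nlinarith
  rw [Zsqrtd.norm_def] at hnα
  have him : α.im = 0 := by
    by_contra hne
    have h1' : 1 ≤ α.im * α.im := by
      rcases lt_or_gt_of_ne hne with h | h <;> nlinarith
    have hDm : (m : ℤ) < (D : ℤ) := by exact_mod_cast hlt
    nlinarith [mul_self_nonneg α.re]
  rw [him] at hnα
  simp only [mul_zero, sub_zero] at hnα
  have hre : α.re * α.re = (m : ℤ) := hnα
  have hprime : Prime (m : ℤ) := Nat.prime_iff_prime_int.mp hm
  rcases hprime.irreducible.isUnit_or_isUnit hre.symm with h | h <;>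
  · rw [Int.isUnit_iff] at h
    have h2le := hm.two_le
    rcases h with h | h <;> rw [h] at hre <;> omega
end
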